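/- arXiv:1412.4345 — 4 statements merged into one kernel-verified Lean document; each statement's English description precedes it below -/
import Mathlib

section
/- For all real b, all real c with 0 < |c| ≤ π, and all t in (0,1) such that the denominator t(b²+c²)(cos(2ct)-1) + t²b²c·sin(2ct) is nonzero, one has -((b²+c²)(cos(2ct)-1) + 2t²b²c²cos(2ct) - 2tc³sin(2ct)) / (t(b²+c²)(cos(2ct)-1) + t²b²c·sin(2ct)) ≥ -5/t. -/
/-!
Put `u = 2 c t`, so `0 < |u| < 2π`, and write the trace as `N / D`. The denominator `D` is
negative, and clearing it turns the estimate into `t N + 5 D ≤ 0`, where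
`t N + 5 D = t / 2 * (b² bCoeff u + 2 c² (u sin u - 4 (1 - cos u)))`,
`bCoeff u = (8 - u²) cos u - 8 + 5 u sin u`. Both brackets are nonpositive for `|u| ≤ 2π`.
The second follows from `u sin u ≤ 2 (1 - cos u)`, the half-angle form of `x cos x ≤ sin x` on `[0, π]`,
which also gives `D < 0`. For `bCoeff u = -u⁶/90 + O(u⁸)` the Taylor bounds
`cos u ≤ 1 - u²/2 + u⁴/24` and `sin u ≤ u - u³/6 + u⁵/120` settle `u² ≤ 8`, and crude sign
and Jordan bounds settle the range up to `2π`.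
-/

open Real Set

lemma le_of_deriv_le_on_Icc {f g : ℝ → ℝ} {a b : ℝ} (hf : Differentiable ℝ f)
    (hg : Differentiable ℝ g) (ha : f a ≤ g a) (hle : ∀ x ∈ Ico a b, deriv f x ≤ deriv g x) :
    ∀ x ∈ Icc a b, f x ≤ g x :=
  image_le_of_deriv_right_le_deriv_boundary hf.continuous.continuousOn
    (fun x _ => (hf x).hasDerivAt.hasDerivWithinAt) ha hg.continuous.continuousOn
    (fun x _ => (hg x).hasDerivAt.hasDerivWithinAt) hle

lemma cos_le_quartic {x : ℝ} (hx : 0 ≤ x) : cos x ≤ 1 - x ^ 2 / 2 + x ^ 4 / 24 := by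
  refine le_of_deriv_le_on_Icc (f := cos) (g := fun y => 1 - y ^ 2 / 2 + y ^ 4 / 24)
    (by fun_prop) (by fun_prop) (by simp) (fun y hy => ?_) x ⟨hx, le_rfl⟩
  simp (disch := fun_prop)
  linarith [sin_ge_sub_cube hy.1]

lemma sin_le_quintic {x : ℝ} (hx : 0 ≤ x) : sin x ≤ x - x ^ 3 / 6 + x ^ 5 / 120 := by
  refine le_of_deriv_le_on_Icc (f := sin) (g := fun y => y - y ^ 3 / 6 + y ^ 5 / 120)
    (by fun_prop) (by fun_prop) (by simp) (fun y hy => ?_) x ⟨hx, le_rfl⟩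
  simp (disch := fun_prop)
  linarith [cos_le_quartic hy.1]

lemma mul_cos_le_sin {x : ℝ} (hx₀ : 0 ≤ x) (hxπ : x ≤ π) : x * cos x ≤ sin x := by
  refine le_of_deriv_le_on_Icc (f := fun y => y * cos y) (g := sin)
    (by fun_prop) (by fun_prop) (by simp) (fun y hy => ?_) x ⟨hx₀, hxπ⟩
  simp (disch := fun_prop)
  exact mul_nonneg hy.1 (sin_nonneg_of_nonneg_of_le_pi hy.1 hy.2.le)

lemma abs_mul_sin_abs (u : ℝ) : |u| * sin |u| = u * sin u := by
  rcases abs_cases u with ⟨h, -⟩ | ⟨h, -⟩ <;> simp [h, sin_neg]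

lemma mul_sin_le_two_mul_one_sub_cos {u : ℝ} (hu : |u| ≤ 2 * π) :
    u * sin u ≤ 2 * (1 - cos u) := by
  obtain ⟨x, hx⟩ : ∃ x, |u| = 2 * x := ⟨|u| / 2, by ring⟩
  have hx₀ : 0 ≤ x := by linarith [abs_nonneg u]
  have hxπ : x ≤ π := by linarith
  rw [← abs_mul_sin_abs, ← cos_abs, hx, sin_two_mul, cos_two_mul, cos_sq']
  nlinarith [mul_le_mul_of_nonneg_left (mul_cos_le_sin hx₀ hxπ)
    (sin_nonneg_of_nonneg_of_le_pi hx₀ hxπ)]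

lemma cos_lt_one_of_ne_zero {u : ℝ} (hu₀ : u ≠ 0) (hu : |u| < 2 * π) : cos u < 1 :=
  (cos_le_one u).lt_of_ne fun h =>
    hu₀ ((cos_eq_one_iff_of_lt_of_lt (by linarith [neg_abs_le u]) (by linarith [le_abs_self u])).1 h)

noncomputable def bCoeff (u : ℝ) : ℝ := (8 - u ^ 2) * cos u - 8 + 5 * u * sin u

lemma bCoeff_abs (u : ℝ) : bCoeff |u| = bCoeff u := by
  simp only [bCoeff, sq_abs, cos_abs, mul_assoc, abs_mul_sin_abs]

lemma bCoeff_nonpos_of_sq_le_eight {u : ℝ} (hu₀ : 0 ≤ u) (hu : u ^ 2 ≤ 8) : bCoeff u ≤ 0 := by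
  have hcos := mul_le_mul_of_nonneg_left (cos_le_quartic hu₀) (sub_nonneg.2 hu)
  have hsin := mul_le_mul_of_nonneg_left (sin_le_quintic hu₀) (by positivity : (0:ℝ) ≤ 5 * u)
  unfold bCoeff
  nlinarith

lemma bCoeff_nonpos_of_eight_le_sq_of_le_pi {u : ℝ} (hu₀ : 0 ≤ u) (hu : 8 ≤ u ^ 2) (huπ : u ≤ π) :
    bCoeff u ≤ 0 := by
  have hsin : sin u ≤ π - u := by rw [← sin_pi_sub]; exact sin_le (by linarith)
  have hcos := neg_one_le_cos u
  have hπ := pi_lt_d2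
  have hu' : 2.82 ≤ u := by nlinarith
  unfold bCoeff
  nlinarith [mul_nonneg (sub_nonneg.2 hu) (by linarith : 0 ≤ 1 + cos u),
    mul_le_mul_of_nonneg_left hsin (by positivity : (0:ℝ) ≤ 5 * u)]

lemma bCoeff_nonpos_of_pi_le_of_le_two_pi {u : ℝ} (hπu : π ≤ u) (hu : u ≤ 2 * π) :
    bCoeff u ≤ 0 := by
  have hπ := pi_gt_d2
  have hu8 : 8 ≤ u ^ 2 := by nlinarith
  have hsin : sin u ≤ 0 := by
    have := sin_nonneg_of_nonneg_of_le_pi (x := u - π) (by linarith) (by linarith)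
    rwa [sin_sub_pi, neg_nonneg] at this
  unfold bCoeff
  rcases le_total u (3 * π / 2) with hu₃ | hu₃
  · obtain ⟨v, rfl⟩ : ∃ v, u = v + π := ⟨u - π, by ring⟩
    have hv₀ : 0 ≤ v := by linarith
    have hjordan : 0.63 * v ≤ sin v := by
      have h2π : 0.63 ≤ 2 / π := by rw [le_div_iff₀ pi_pos]; linarith [pi_lt_d2]
      nlinarith [mul_le_sin hv₀ (by linarith)]
    rw [sin_add_pi, cos_add_pi]
    nlinarith [mul_le_mul_of_nonneg_left hjordan (by linarith : (0:ℝ) ≤ 5 * (v + π)),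
      mul_nonneg (sub_nonneg.2 hu8) (sub_nonneg.2 (cos_le_one v)), pi_lt_d2]
  · have hcos : 0 ≤ cos u := by
      rw [← cos_two_pi_sub]
      exact cos_nonneg_of_neg_pi_div_two_le_of_le (by linarith) (by linarith)
    nlinarith [mul_nonneg hcos (sub_nonneg.2 hu8), mul_nonpos_of_nonneg_of_nonpos
      (by linarith : (0:ℝ) ≤ 5 * u) hsin]

lemma bCoeff_nonpos {u : ℝ} (hu : |u| ≤ 2 * π) : bCoeff u ≤ 0 := by
  rw [← bCoeff_abs]
  rcases le_total (|u| ^ 2) 8 with h8 | h8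
  · exact bCoeff_nonpos_of_sq_le_eight (abs_nonneg u) h8
  rcases le_total |u| π with hπ | hπ
  · exact bCoeff_nonpos_of_eight_le_sq_of_le_pi (abs_nonneg u) h8 hπ
  · exact bCoeff_nonpos_of_pi_le_of_le_two_pi hπ hu

lemma trace_F1_ge_of_trig_bounds (b c t : ℝ) (ht : 0 < t) (hc : c ≠ 0)
    (hcos : cos (2 * c * t) < 1)
    (hsin : 2 * c * t * sin (2 * c * t) ≤ 2 * (1 - cos (2 * c * t)))
    (hb : bCoeff (2 * c * t) ≤ 0) :
    -((b ^ 2 + c ^ 2) * (cos (2 * c * t) - 1)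
        + 2 * t ^ 2 * b ^ 2 * c ^ 2 * cos (2 * c * t)
        - 2 * t * c ^ 3 * sin (2 * c * t)) /
      (t * (b ^ 2 + c ^ 2) * (cos (2 * c * t) - 1)
        + t ^ 2 * b ^ 2 * c * sin (2 * c * t)) ≥ -5 / t := by
  unfold bCoeff at hb
  set u := 2 * c * t
  set C := cos u
  set S := sin u
  have hc2 : 0 < c ^ 2 := by positivity
  have hb2 := mul_nonpos_of_nonneg_of_nonpos (sq_nonneg b) hb
  have hsin2 := mul_nonpos_of_nonneg_of_nonpos (sq_nonneg b) (sub_nonpos.2 hsin)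
  have hsinc := mul_nonpos_of_nonneg_of_nonpos hc2.le (sub_nonpos.2 hsin)
  have hcos2 := mul_pos hc2 (sub_pos.2 hcos)
  have hD : t * (b ^ 2 + c ^ 2) * (C - 1) + t ^ 2 * b ^ 2 * c * S < 0 := by
    have hD_eq : t * (b ^ 2 + c ^ 2) * (C - 1) + t ^ 2 * b ^ 2 * c * S
        = t / 2 * (b ^ 2 * (u * S - 2 * (1 - C)) - 2 * (c ^ 2 * (1 - C))) := by ring
    rw [hD_eq]
    exact mul_neg_of_pos_of_neg (by positivity) (by linarith)
  rw [ge_iff_le, le_div_iff_of_neg hD, div_mul_eq_mul_div, le_div_iff₀ ht]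
  have hkey : -((b ^ 2 + c ^ 2) * (C - 1) + 2 * t ^ 2 * b ^ 2 * c ^ 2 * C - 2 * t * c ^ 3 * S) * t
      + 5 * (t * (b ^ 2 + c ^ 2) * (C - 1) + t ^ 2 * b ^ 2 * c * S)
      = t / 2 * (b ^ 2 * ((8 - u ^ 2) * C - 8 + 5 * u * S)
        + 2 * c ^ 2 * (u * S - 2 * (1 - C)) - 4 * (c ^ 2 * (1 - C))) := by ring
  have := mul_nonpos_of_nonneg_of_nonpos (by positivity : 0 ≤ t / 2)
    (by linarith : b ^ 2 * ((8 - u ^ 2) * C - 8 + 5 * u * S)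
        + 2 * c ^ 2 * (u * S - 2 * (1 - C)) - 4 * (c ^ 2 * (1 - C)) ≤ 0)
  linarith

theorem trace_F1_estimate_general (b c t : ℝ) (hc0 : 0 < |c|) (hcπ : |c| ≤ π)
    (ht0 : 0 < t) (ht1 : t < 1) :
    -((b ^ 2 + c ^ 2) * (Real.cos (2 * c * t) - 1)
        + 2 * t ^ 2 * b ^ 2 * c ^ 2 * Real.cos (2 * c * t)
        - 2 * t * c ^ 3 * Real.sin (2 * c * t)) /
      (t * (b ^ 2 + c ^ 2) * (Real.cos (2 * c * t) - 1)
        + t ^ 2 * b ^ 2 * c * Real.sin (2 * c * t)) ≥ -5 / t := by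
  have hc : c ≠ 0 := abs_pos.1 hc0
  have hu : |2 * c * t| < 2 * π := by
    rw [abs_mul, abs_mul, abs_two, abs_of_pos ht0, mul_assoc]
    exact mul_lt_mul_of_pos_left (by nlinarith) two_pos
  exact trace_F1_ge_of_trig_bounds b c t ht0 hc
    (cos_lt_one_of_ne_zero (by positivity) hu)
    (mul_sin_le_two_mul_one_sub_cos hu.le) (bCoeff_nonpos hu.le)

/-- The key trace estimate `tr F₁(1-t) ≥ -5/t` on the Heisenberg group. -/
theorem trace_F1_estimate (b c t : ℝ) (hc0 : 0 < |c|) (hcπ : |c| ≤ π)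
    (ht0 : 0 < t) (ht1 : t < 1)
    (hden : t * (b ^ 2 + c ^ 2) * (Real.cos (2 * c * t) - 1)
      + t ^ 2 * b ^ 2 * c * Real.sin (2 * c * t) ≠ 0) :
    -((b ^ 2 + c ^ 2) * (Real.cos (2 * c * t) - 1)
        + 2 * t ^ 2 * b ^ 2 * c ^ 2 * Real.cos (2 * c * t)
        - 2 * t * c ^ 3 * Real.sin (2 * c * t)) /
      (t * (b ^ 2 + c ^ 2) * (Real.cos (2 * c * t) - 1)
        + t ^ 2 * b ^ 2 * c * Real.sin (2 * c * t)) ≥ -5 / t :=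
  trace_F1_estimate_general b c t hc0 hcπ ht0 ht1
end

section
/- For real c with c > π, there exists t in (0,1) such that (b²+c²)·sin(ct) - t·b²c·cos(ct) = 0 or sin(ct) = 0, for any real b; in particular the function t ↦ t(b²+c²)(cos(2ct)-1) + t²b²c·sin(2ct) has a zero in (0,1). -/
open Real

/-- Existence of conjugate points on the Heisenberg group when `c > π`. -/
theorem exists_zero_of_gt_pi (c : ℝ) (hc : π < c) (b : ℝ) :
    ∃ t : ℝ, 0 < t ∧ t < 1 ∧
      ((b ^ 2 + c ^ 2) * Real.sin (c * t) - t * b ^ 2 * c * Real.cos (c * t) = 0 ∨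
        Real.sin (c * t) = 0) ∧
      t * (b ^ 2 + c ^ 2) * (Real.cos (2 * c * t) - 1)
        + t ^ 2 * b ^ 2 * c * Real.sin (2 * c * t) = 0 := by
  have hcpos : 0 < c := lt_trans Real.pi_pos hc
  refine ⟨π / c, div_pos Real.pi_pos hcpos, (div_lt_one hcpos).2 hc, ?_, ?_⟩
  · right
    rw [mul_div_cancel₀ _ hcpos.ne', Real.sin_pi]
  · have h : 2 * c * (π / c) = 2 * π := by field_simp
    rw [h, Real.sin_two_pi, Real.cos_two_pi]
    ring
end

section
/- Let c in (0, π) and b real. Then for t in [0,1], ((1-t)·sin(c(1-t))·((1-t)b²c·cos(c(1-t)) - (b²+c²))) / (sin(c)·(b²c·cos(c) - (b²+c²))) ≥ (1-t)^5, provided sin(c)·(b²c·cos(c) - (b²+c²)) ≠ 0 and b²c·cos(c) - (b²+c²) < 0. -/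
open Real

private lemma sin_taylor_lb (x : ℝ) (hx : 0 ≤ x) : x - x ^ 3 / 6 ≤ Real.sin x := by
  have hmono : Monotone (fun x : ℝ => Real.sin x - (x - x ^ 3 / 6)) := by
    apply monotone_of_deriv_nonneg
    · exact Real.differentiable_sin.sub (by fun_prop)
    · intro y
      have hd : HasDerivAt (fun x : ℝ => Real.sin x - (x - x ^ 3 / 6))
          (Real.cos y - (1 - (3 : ℕ) * y ^ 2 / 6)) y := by
        exact (Real.hasDerivAt_sin y).sub ((hasDerivAt_id y).sub ((hasDerivAt_pow 3 y).div_const 6))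
      rw [hd.deriv]
      have := Real.one_sub_sq_div_two_le_cos (x := y)
      push_cast
      nlinarith
  have h := hmono hx
  simpa using h

private lemma cos_taylor_ub (x : ℝ) (hx : 0 ≤ x) : Real.cos x ≤ 1 - x ^ 2 / 2 + x ^ 4 / 24 := by
  have hmono : MonotoneOn (fun x : ℝ => (1 - x ^ 2 / 2 + x ^ 4 / 24) - Real.cos x) (Set.Ici 0) := by
    apply monotoneOn_of_deriv_nonneg (convex_Ici 0)
    · exact ((by fun_prop : Continuous fun x : ℝ => (1 - x ^ 2 / 2 + x ^ 4 / 24)).sub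
        Real.continuous_cos).continuousOn
    · exact ((by fun_prop : Differentiable ℝ fun x : ℝ => (1 - x ^ 2 / 2 + x ^ 4 / 24)).sub
        Real.differentiable_cos).differentiableOn
    · intro y hy
      rw [interior_Ici] at hy
      have hd : HasDerivAt (fun x : ℝ => (1 - x ^ 2 / 2 + x ^ 4 / 24) - Real.cos x)
          ((0 - (2 : ℕ) * y ^ 1 / 2 + (4 : ℕ) * y ^ 3 / 24) - -Real.sin y) y := by
        exact (((hasDerivAt_const y (1 : ℝ)).sub ((hasDerivAt_pow 2 y).div_const 2)).add
          ((hasDerivAt_pow 4 y).div_const 24)).sub (Real.hasDerivAt_cos y)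
      rw [hd.deriv]
      have := sin_taylor_lb y (le_of_lt hy)
      push_cast
      nlinarith
  have h := hmono (by simp : (0:ℝ) ∈ Set.Ici 0) (by simpa using hx) hx
  simp at h
  linarith

private lemma mul_cos_le_sin_s11 (x : ℝ) (hx : 0 ≤ x) (hx' : x ≤ π) : x * Real.cos x ≤ Real.sin x := by
  have hsin : 0 ≤ Real.sin x := Real.sin_nonneg_of_nonneg_of_le_pi hx hx'
  rcases le_or_gt (Real.cos x) 0 with h | h
  · nlinarith
  · have hx2 : x < π / 2 := by
      by_contra hcon
      push_neg at hcon
      have := Real.cos_nonpos_of_pi_div_two_le_of_le hcon (by linarith [Real.pi_pos])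
      linarith
    rcases eq_or_lt_of_le hx with h0 | h0
    · simp [← h0]
    · have ht := Real.lt_tan h0 hx2
      rw [Real.tan_eq_sin_div_cos, lt_div_iff₀ h] at ht
      linarith

private lemma K_le_three (x : ℝ) (hx : 0 ≤ x) (hx' : x ≤ π) :
    x ^ 2 * Real.sin x + 2 * x * Real.cos x ≤ 3 := by
  rcases le_or_gt x (11/5) with h | h
  · have hs := Real.sin_le_one x
    have hc := cos_taylor_ub x hx
    nlinarith [mul_le_mul_of_nonneg_left hs (sq_nonneg x),
      mul_le_mul_of_nonneg_left hc (by linarith : (0:ℝ) ≤ 2 * x),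
      mul_nonneg hx hx, mul_nonneg (mul_nonneg hx hx) hx,
      mul_nonneg (mul_nonneg (mul_nonneg hx hx) hx) hx,
      mul_nonneg (sub_nonneg.2 h) hx, mul_nonneg (mul_nonneg (sub_nonneg.2 h) hx) hx,
      mul_nonneg (mul_nonneg (mul_nonneg (sub_nonneg.2 h) hx) hx) hx,
      mul_nonneg (mul_nonneg (sub_nonneg.2 h) (sub_nonneg.2 h)) hx,
      mul_nonneg (mul_nonneg (mul_nonneg (sub_nonneg.2 h) (sub_nonneg.2 h)) hx) hx,
      sq_nonneg (x - 2), sq_nonneg (x - 1)]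
  · have hπx : 0 ≤ π - x := by linarith
    have h1 : Real.sin x ≤ π - x := by
      rw [← Real.sin_pi_sub]
      exact Real.sin_le hπx
    have h2 : Real.cos x ≤ (π - x) ^ 2 / 2 - 1 := by
      have := Real.one_sub_sq_div_two_le_cos (x := π - x)
      rw [Real.cos_pi_sub] at this
      linarith
    have hpi1 : π < 3.1416 := by linarith [Real.pi_lt_d6]
    have hpi2 : 3.1415 < π := by linarith [Real.pi_gt_d6]
    nlinarith [mul_le_mul_of_nonneg_left h1 (sq_nonneg x),
      mul_le_mul_of_nonneg_left h2 (by linarith : (0:ℝ) ≤ 2 * x),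
      mul_nonneg hπx hπx, mul_nonneg (mul_nonneg hπx hπx) hπx,
      mul_nonneg hπx (by linarith : (0:ℝ) ≤ x - 11/5),
      mul_nonneg (mul_nonneg hπx hπx) (by linarith : (0:ℝ) ≤ x - 11/5)]

private lemma anti_sin_div : AntitoneOn (fun x => Real.sin x / x) (Set.Ioo 0 π) := by
  apply antitoneOn_of_deriv_nonpos (convex_Ioo 0 π)
  · exact Real.continuous_sin.continuousOn.div continuousOn_id
      (fun x hx => ne_of_gt hx.1)
  · rw [interior_Ioo]
    intro x hx
    exact ((Real.differentiable_sin x).div (differentiableAt_id) (ne_of_gt hx.1)).differentiableWithinAt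
  · rw [interior_Ioo]
    intro x hx
    have hx0 : x ≠ 0 := ne_of_gt hx.1
    have hd : HasDerivAt (fun x => Real.sin x / x)
        ((Real.cos x * x - Real.sin x * 1) / x ^ 2) x :=
      (Real.hasDerivAt_sin x).div (hasDerivAt_id x) hx0
    rw [hd.deriv]
    apply div_nonpos_of_nonpos_of_nonneg
    · have := mul_cos_le_sin_s11 x hx.1.le hx.2.le
      nlinarith
    · positivity

private lemma anti_aux_div : AntitoneOn (fun x => (1 - x * Real.cos x) / x ^ 3) (Set.Ioo 0 π) := by
  apply antitoneOn_of_deriv_nonpos (convex_Ioo 0 π)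
  · apply ContinuousOn.div
    · fun_prop
    · fun_prop
    · exact fun x hx => pow_ne_zero 3 (ne_of_gt hx.1)
  · rw [interior_Ioo]
    intro x hx
    apply DifferentiableAt.differentiableWithinAt
    exact (((differentiableAt_const _).sub ((differentiableAt_id).mul (Real.differentiable_cos x))).div
      (differentiableAt_pow 3) (pow_ne_zero 3 (ne_of_gt hx.1)))
  · rw [interior_Ioo]
    intro x hx
    have hx0 : x ≠ 0 := ne_of_gt hx.1
    have hd : HasDerivAt (fun x : ℝ => 1 - x * Real.cos x)
        (0 - (1 * Real.cos x + x * -Real.sin x)) x :=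
      (hasDerivAt_const x (1:ℝ)).sub ((hasDerivAt_id x).mul (Real.hasDerivAt_cos x))
    have hd3 : HasDerivAt (fun x : ℝ => x ^ 3) ((3:ℕ) * x ^ 2) x := by
      simpa using hasDerivAt_pow 3 x
    have hdd := hd.div hd3 (pow_ne_zero 3 hx0)
    rw [(show HasDerivAt (fun x : ℝ => (1 - x * Real.cos x) / x ^ 3) _ x from hdd).deriv]
    apply div_nonpos_of_nonpos_of_nonneg
    · have hK := K_le_three x hx.1.le hx.2.le
      have := mul_le_mul_of_nonneg_left hK (sq_nonneg x)
      push_cast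
      nlinarith
    · positivity

private lemma crux (c s : ℝ) (hc0 : 0 < c) (hcπ : c < π) (hs0 : 0 < s) (hs1 : s ≤ 1) :
    s ^ 4 * (Real.sin c * (1 - c * Real.cos c)) ≤
      Real.sin (c * s) * (1 - c * s * Real.cos (c * s)) := by
  set x := c * s with hxdef
  have hx0 : 0 < x := mul_pos hc0 hs0
  have hxc : x ≤ c := by nlinarith
  have hxπ : x < π := lt_of_le_of_lt hxc hcπ
  have hxm : x ∈ Set.Ioo 0 π := ⟨hx0, hxπ⟩
  have hcm : c ∈ Set.Ioo 0 π := ⟨hc0, hcπ⟩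
  have h1 := anti_sin_div hxm hcm hxc
  have h2 := anti_aux_div hxm hcm hxc
  have hsin_c : 0 ≤ Real.sin c := Real.sin_nonneg_of_nonneg_of_le_pi hc0.le hcπ.le
  have hsin_x : 0 ≤ Real.sin x := Real.sin_nonneg_of_nonneg_of_le_pi hx0.le hxπ.le
  have hcc : c * Real.cos c ≤ 1 := by
    have := mul_cos_le_sin_s11 c hc0.le hcπ.le
    have := Real.sin_le_one c
    linarith
  have hA : (0:ℝ) ≤ Real.sin c / c := div_nonneg hsin_c hc0.le
  have hB : (0:ℝ) ≤ (1 - c * Real.cos c) / c ^ 3 := by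
    apply div_nonneg (by linarith) (by positivity)
  have hC : (0:ℝ) ≤ Real.sin x / x := div_nonneg hsin_x hx0.le
  have hm : (Real.sin c / c) * ((1 - c * Real.cos c) / c ^ 3) ≤
      (Real.sin x / x) * ((1 - x * Real.cos x) / x ^ 3) :=
    mul_le_mul h1 h2 hB hC
  have hmul := mul_le_mul_of_nonneg_left hm (by positivity : (0:ℝ) ≤ x ^ 4)
  have e2 : x ^ 4 * ((Real.sin x / x) * ((1 - x * Real.cos x) / x ^ 3)) =
      Real.sin x * (1 - x * Real.cos x) := by
    field_simp
  have e1 : x ^ 4 * ((Real.sin c / c) * ((1 - c * Real.cos c) / c ^ 3)) =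
      s ^ 4 * (Real.sin c * (1 - c * Real.cos c)) := by
    rw [hxdef]
    field_simp
  rw [e1, e2] at hmul
  exact hmul

/-- The `F₁`-block volume contraction factor on the Heisenberg group. -/
theorem F1_contraction_factor (b c t : ℝ) (hc : c ∈ Set.Ioo 0 π)
    (ht : t ∈ Set.Icc (0 : ℝ) 1)
    (hne : Real.sin c * (b ^ 2 * c * Real.cos c - (b ^ 2 + c ^ 2)) ≠ 0)
    (hneg : b ^ 2 * c * Real.cos c - (b ^ 2 + c ^ 2) < 0) :
    ((1 - t) * Real.sin (c * (1 - t)) *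
        ((1 - t) * b ^ 2 * c * Real.cos (c * (1 - t)) - (b ^ 2 + c ^ 2))) /
      (Real.sin c * (b ^ 2 * c * Real.cos c - (b ^ 2 + c ^ 2))) ≥ (1 - t) ^ 5 := by
  obtain ⟨hc0, hcπ⟩ := hc
  obtain ⟨ht0, ht1⟩ := ht
  set s := 1 - t with hs
  have hs0 : 0 ≤ s := by simp [hs]; linarith
  have hs1 : s ≤ 1 := by simp [hs]; linarith
  have hsinc : 0 < Real.sin c := Real.sin_pos_of_pos_of_lt_pi hc0 hcπ
  have hden : Real.sin c * (b ^ 2 * c * Real.cos c - (b ^ 2 + c ^ 2)) < 0 :=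
    mul_neg_of_pos_of_neg hsinc hneg
  rw [ge_iff_le, le_div_iff_of_neg hden]
  -- concavity: sin (c * s) ≥ s * sin c
  have hcon : s * Real.sin c ≤ Real.sin (c * s) := by
    have h := strictConcaveOn_sin_Icc.concaveOn.2
      (Set.mem_Icc.2 ⟨le_refl (0:ℝ), Real.pi_pos.le⟩)
      (Set.mem_Icc.2 ⟨hc0.le, hcπ.le⟩)
      (by linarith : (0:ℝ) ≤ 1 - s) hs0 (by ring)
    simp only [smul_eq_mul, mul_zero, Real.sin_zero, zero_add, mul_comm s c] at h
    linarith [h]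
  have h25 : s ^ 5 ≤ s ^ 2 := pow_le_pow_of_le_one hs0 hs1 (by norm_num)
  have hY : s ^ 5 * Real.sin c ≤ s * Real.sin (c * s) := by
    calc s ^ 5 * Real.sin c ≤ s ^ 2 * Real.sin c :=
          mul_le_mul_of_nonneg_right h25 hsinc.le
      _ = s * (s * Real.sin c) := by ring
      _ ≤ s * Real.sin (c * s) := mul_le_mul_of_nonneg_left hcon hs0
  have hX : s ^ 5 * (Real.sin c * (1 - c * Real.cos c)) ≤
      s * (Real.sin (c * s) * (1 - c * s * Real.cos (c * s))) := by
    rcases eq_or_lt_of_le hs0 with h | h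
    · simp [← h]
    · have hcx := crux c s hc0 hcπ h hs1
      calc s ^ 5 * (Real.sin c * (1 - c * Real.cos c))
          = s * (s ^ 4 * (Real.sin c * (1 - c * Real.cos c))) := by ring
        _ ≤ s * (Real.sin (c * s) * (1 - c * s * Real.cos (c * s))) :=
            mul_le_mul_of_nonneg_left hcx hs0
  have key : s ^ 5 * (Real.sin c * (b ^ 2 * c * Real.cos c - (b ^ 2 + c ^ 2))) -
      s * Real.sin (c * s) * (s * b ^ 2 * c * Real.cos (c * s) - (b ^ 2 + c ^ 2)) =
      b ^ 2 * (s * (Real.sin (c * s) * (1 - c * s * Real.cos (c * s))) -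
        s ^ 5 * (Real.sin c * (1 - c * Real.cos c))) +
      c ^ 2 * (s * Real.sin (c * s) - s ^ 5 * Real.sin c) := by ring
  have hb := mul_nonneg (sq_nonneg b) (sub_nonneg.2 hX)
  have hc2 := mul_nonneg (sq_nonneg c) (sub_nonneg.2 hY)
  linarith [key, hb, hc2]
end

section
/- Let W be a real d×d matrix and R : [0,1] → Mat(d,ℝ) continuous and symmetric-valued. Suppose F, F̃ : (t₀, 1) → Mat(d,ℝ) are symmetric solutions of the Riccati equation F' = -R̄ - R̃ - F² - FW - WᵀF and F̃' = -R̃ - F̃² - F̃W - WᵀF̃ respectively, where R̄(t) ≥ 0 (positive semidefinite), and F(t) ≥ F̃(t) for all t close enough to 1. Then F(t) ≥ F̃(t) for all t in (t₀, 1). -/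
/-!
`U = F - F̃` solves the linear equation `U' = -R̄ - (F + Wᵀ) U - U (F̃ + W)`, and `U(b) ≥ 0` for
some `b` close to `1`. To propagate this back to `a < b`, perturb the quadratic form by
`ε(t) |w|²` with `ε(t) = η e^{(K+1)(a-t)}`, where `K` bounds `F + F̃ + W + Wᵀ` on `[a, b]`. At the
last time `s` where the perturbed form vanishes at some unit vector `w`, that `w` is an
eigenvector, `U(s) w = -ε(s) w`; the cross terms then reduce to `ε(s) wᵀ(F + F̃ + W + Wᵀ)w`, and the
derivative of the perturbed form at `s` is at most `-wᵀR̄w - ε(s)|w|² < 0`, contradicting its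
positivity just after `s`. Letting `η → 0` gives `U(a) ≥ 0`.
-/

open Matrix Set Topology Filter

section QuadraticForm

variable {n : Type*} [Fintype n]

lemma dotProduct_mulVec_le_sum_abs_mul (N : Matrix n n ℝ) (w : n → ℝ) :
    w ⬝ᵥ N *ᵥ w ≤ (∑ i, ∑ j, |N i j|) * (w ⬝ᵥ w) := by
  have hcoord : ∀ i, w i * w i ≤ w ⬝ᵥ w := fun i =>
    Finset.single_le_sum (f := fun k => w k * w k) (fun k _ => mul_self_nonneg (w k))
      (Finset.mem_univ i)
  have hexpand : w ⬝ᵥ N *ᵥ w = ∑ i, ∑ j, w i * (N i j * w j) := by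
    simp only [dotProduct, mulVec, Finset.mul_sum]
  rw [hexpand, Finset.sum_mul]
  simp only [Finset.sum_mul]
  refine Finset.sum_le_sum fun i _ => Finset.sum_le_sum fun j _ => ?_
  have hij : |w i| * |w j| ≤ w ⬝ᵥ w := by
    nlinarith [hcoord i, hcoord j, abs_nonneg (w i), abs_nonneg (w j), abs_mul_abs_self (w i),
      abs_mul_abs_self (w j)]
  calc w i * (N i j * w j) ≤ |w i * (N i j * w j)| := le_abs_self _
    _ = |N i j| * (|w i| * |w j|) := by rw [abs_mul, abs_mul]; ring
    _ ≤ |N i j| * (w ⬝ᵥ w) := mul_le_mul_of_nonneg_left hij (abs_nonneg _)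

lemma dotProduct_mulVec_nonneg_of_sphere {M : Matrix n n ℝ}
    (h : ∀ w ∈ Metric.sphere (0 : n → ℝ) 1, 0 ≤ w ⬝ᵥ M *ᵥ w) (w : n → ℝ) :
    0 ≤ w ⬝ᵥ M *ᵥ w := by
  rcases eq_or_ne w 0 with rfl | hw
  · simp
  have hnorm : ‖w‖ ≠ 0 := norm_ne_zero_iff.2 hw
  have hunit : ‖w‖⁻¹ • w ∈ Metric.sphere (0 : n → ℝ) 1 := by
    rw [mem_sphere_zero_iff_norm, norm_smul, norm_inv, norm_norm, inv_mul_cancel₀ hnorm]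
  have hscaled := h _ hunit
  rw [mulVec_smul, dotProduct_smul, smul_dotProduct, smul_eq_mul, smul_eq_mul] at hscaled
  have hpos : 0 < ‖w‖⁻¹ * ‖w‖⁻¹ := by positivity
  nlinarith

lemma dotProduct_mul_add_mul_mulVec_of_mulVec_eq_smul {U : Matrix n n ℝ} (hU : U.IsSymm)
    (A B : Matrix n n ℝ) {w : n → ℝ} {μ : ℝ} (hw : U *ᵥ w = μ • w) :
    w ⬝ᵥ (A * U + U * B) *ᵥ w = μ * (w ⬝ᵥ (A + B) *ᵥ w) := by
  have hleft : w ᵥ* U = μ • w := by rw [← mulVec_transpose, hU.eq, hw]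
  rw [add_mulVec, add_mulVec, ← mulVec_mulVec, ← mulVec_mulVec, dotProduct_add,
    dotProduct_mulVec w U, hleft, hw, mulVec_smul]
  simp only [dotProduct_add, dotProduct_smul, smul_dotProduct, smul_eq_mul]
  ring

lemma dotProduct_add_smul_one_mulVec [DecidableEq n] (M : Matrix n n ℝ) (c : ℝ) (w : n → ℝ) :
    w ⬝ᵥ (M + c • 1) *ᵥ w = w ⬝ᵥ M *ᵥ w + c * (w ⬝ᵥ w) := by
  rw [add_mulVec, smul_mulVec, one_mulVec, dotProduct_add, dotProduct_smul, smul_eq_mul]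

lemma hasDerivAt_dotProduct_mulVec {M : ℝ → Matrix n n ℝ} {M' : Matrix n n ℝ} {t : ℝ}
    (h : ∀ i j, HasDerivAt (fun s => M s i j) (M' i j) t) (v w : n → ℝ) :
    HasDerivAt (fun s => v ⬝ᵥ M s *ᵥ w) (v ⬝ᵥ M' *ᵥ w) t := by
  simp only [dotProduct, mulVec]
  exact HasDerivAt.fun_sum fun i _ =>
    (HasDerivAt.fun_sum fun j _ => (h i j).mul_const (w j)).const_mul (v i)

end QuadraticForm

lemma continuousAt_of_hasDerivAt_apply {m n : Type*} {M : ℝ → Matrix m n ℝ}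
    {M' : Matrix m n ℝ} {t : ℝ} (h : ∀ i j, HasDerivAt (fun s => M s i j) (M' i j) t) :
    ContinuousAt M t :=
  continuousAt_pi.2 fun i => continuousAt_pi.2 fun j => (h i j).continuousAt

lemma HasDerivAt.nonneg_of_eventually_le_right {g : ℝ → ℝ} {g' x : ℝ} (hg : HasDerivAt g g' x)
    (hle : ∀ᶠ t in 𝓝[>] x, g x ≤ g t) : 0 ≤ g' := by
  have hslope := (hasDerivWithinAt_iff_tendsto_slope' (s := Ioi x) (lt_irrefl x)).1
    hg.hasDerivWithinAt
  refine ge_of_tendsto hslope ?_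
  filter_upwards [hle, self_mem_nhdsWithin] with t ht hxt
  rw [slope_def_field]
  exact div_nonneg (sub_nonneg.2 ht) (sub_nonneg.2 hxt.le)

lemma exists_last_contact {X : Type*} [TopologicalSpace X] [T2Space X] {S : Set X}
    (hS : IsCompact S) {a b : ℝ} {q : ℝ → X → ℝ}
    (hq : ContinuousOn (Function.uncurry q) (Icc a b ×ˢ S))
    (hb : ∀ x ∈ S, 0 < q b x) {x₀ : X} (hx₀ : x₀ ∈ S) (ha : q a x₀ ≤ 0) (hab : a ≤ b) :
    ∃ s ∈ Ico a b, ∃ x ∈ S, q s x = 0 ∧ (∀ y ∈ S, 0 ≤ q s y) ∧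
      ∀ t ∈ Ioc s b, ∀ y ∈ S, 0 < q t y := by
  have hK : IsCompact (Icc a b ×ˢ S) := isCompact_Icc.prod hS
  set Z : Set ℝ := Prod.fst '' (Icc a b ×ˢ S ∩ Function.uncurry q ⁻¹' Iic 0)
  have hZ : IsCompact Z :=
    (hK.of_isClosed_subset (hq.preimage_isClosed_of_isClosed hK.isClosed isClosed_Iic)
      inter_subset_left).image continuous_fst
  have hZne : Z.Nonempty := ⟨a, (a, x₀), ⟨⟨⟨le_rfl, hab⟩, hx₀⟩, ha⟩, rfl⟩
  obtain ⟨⟨s, x⟩, ⟨⟨hs, hx⟩, hsx⟩, hsup⟩ := hZ.sSup_mem hZne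
  dsimp only at hsup hs hx
  subst hsup
  have hafter : ∀ t ∈ Ioc (sSup Z) b, ∀ y ∈ S, 0 < q t y := by
    intro t ht y hy
    by_contra! hty
    have htZ : t ∈ Z := ⟨(t, y), ⟨⟨⟨hs.1.trans ht.1.le, ht.2⟩, hy⟩, hty⟩, rfl⟩
    exact (le_csSup hZ.bddAbove htZ).not_gt ht.1
  have hsb : sSup Z < b := lt_of_le_of_ne hs.2 fun h => (hb x hx).not_ge (h ▸ hsx)
  have hat : ∀ y ∈ S, 0 ≤ q (sSup Z) y := by
    intro y hy
    have hcont : ContinuousWithinAt (fun t => q t y) (Icc a b) (sSup Z) :=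
      (hq.comp (continuousOn_id.prodMk continuousOn_const) fun t ht => ⟨ht, hy⟩) _ hs
    have hright : Ioo (sSup Z) b ∈ 𝓝[>] sSup Z := Ioo_mem_nhdsGT hsb
    refine ge_of_tendsto (hcont.mono_of_mem_nhdsWithin (mem_of_superset hright
      fun t ht => ⟨hs.1.trans ht.1.le, ht.2.le⟩)).tendsto ?_
    filter_upwards [hright] with t ht
    exact (hafter t (Ioo_subset_Ioc_self ht) y hy).le
  exact ⟨sSup Z, ⟨hs.1, hsb⟩, x, hx, le_antisymm hsx (hat x hx), hat, hafter⟩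

lemma riccati_sub_riccati {R : Type*} [Ring R] (Rbar Rtil F G W Wt : R) :
    (-Rbar - Rtil - F * F - F * W - Wt * F) - (-Rtil - G * G - G * W - Wt * G) =
      -Rbar - (F + Wt) * (F - G) - (F - G) * (G + W) := by
  noncomm_ring

section Sylvester

variable {n : Type*} [Fintype n]

lemma IsCompact.exists_dotProduct_mulVec_le {X : Type*} [TopologicalSpace X] {S : Set X}
    (hS : IsCompact S) {N : X → Matrix n n ℝ} (hN : ContinuousOn N S) :
    ∃ K, ∀ x ∈ S, ∀ w, w ⬝ᵥ N x *ᵥ w ≤ K * (w ⬝ᵥ w) := by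
  have hcont : ContinuousOn (fun x => ∑ i, ∑ j, |N x i j|) S :=
    continuousOn_finsetSum _ fun i _ => continuousOn_finsetSum _ fun j _ =>
      (continuous_abs.comp (continuous_id.matrix_elem i j)).comp_continuousOn hN
  obtain ⟨K, hK⟩ := hS.bddAbove_image hcont
  exact ⟨K, fun x hx w => (dotProduct_mulVec_le_sum_abs_mul _ w).trans
    (mul_le_mul_of_nonneg_right (hK (mem_image_of_mem _ hx))
      (by simpa using dotProduct_star_self_nonneg w))⟩

lemma mulVec_eq_neg_smul_of_dotProduct_mulVec_add_mul_eq_zero [DecidableEq n]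
    {U : Matrix n n ℝ} (hU : U.IsSymm) {c : ℝ}
    (hmin : ∀ y ∈ Metric.sphere (0 : n → ℝ) 1, 0 ≤ y ⬝ᵥ U *ᵥ y + c * (y ⬝ᵥ y)) {w : n → ℝ}
    (hw : w ⬝ᵥ U *ᵥ w + c * (w ⬝ᵥ w) = 0) : U *ᵥ w = (-c) • w := by
  have hshift : (U + c • 1).PosSemidef := by
    refine PosSemidef.of_dotProduct_mulVec_nonneg
      (isHermitian_iff_isSymm.2 (hU.add (isSymm_one.smul c))) fun v => ?_
    rw [star_trivial]
    exact dotProduct_mulVec_nonneg_of_sphere (fun y hy => by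
      rw [dotProduct_add_smul_one_mulVec]; exact hmin y hy) v
  have hnull := (hshift.dotProduct_mulVec_zero_iff w).1 (by
    rw [star_trivial, dotProduct_add_smul_one_mulVec]; exact hw)
  rwa [add_mulVec, smul_mulVec, one_mulVec, add_eq_zero_iff_eq_neg, ← neg_smul] at hnull

lemma posSemidef_of_forall_dotProduct_mulVec_add_mul_nonneg {U : Matrix n n ℝ} (hU : U.IsSymm)
    (h : ∀ η > 0, ∀ w ∈ Metric.sphere (0 : n → ℝ) 1, 0 ≤ w ⬝ᵥ U *ᵥ w + η * (w ⬝ᵥ w)) :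
    U.PosSemidef := by
  refine PosSemidef.of_dotProduct_mulVec_nonneg (isHermitian_iff_isSymm.2 hU) fun v => ?_
  rw [star_trivial]
  refine dotProduct_mulVec_nonneg_of_sphere (fun w hw => ?_) v
  have hlim : Tendsto (fun η : ℝ => w ⬝ᵥ U *ᵥ w + η * (w ⬝ᵥ w)) (𝓝[>] 0)
      (𝓝 (w ⬝ᵥ U *ᵥ w)) := by
    refine (Continuous.tendsto' (by fun_prop) (0 : ℝ) _ ?_).mono_left nhdsWithin_le_nhds
    simp
  exact ge_of_tendsto hlim (eventually_nhdsWithin_of_forall fun η hη => h η hη w hw)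

lemma dotProduct_sylvester_mulVec_lt {U P A B : Matrix n n ℝ} (hU : U.IsSymm)
    (hP : P.PosSemidef) {w : n → ℝ} (hw : w ≠ 0) {c K : ℝ} (hc : 0 < c)
    (heig : U *ᵥ w = (-c) • w) (hK : w ⬝ᵥ (A + B) *ᵥ w ≤ K * (w ⬝ᵥ w)) :
    w ⬝ᵥ (-P - A * U - U * B) *ᵥ w - (K + 1) * c * (w ⬝ᵥ w) < 0 := by
  have hww : 0 < w ⬝ᵥ w := by simpa using dotProduct_star_self_pos_iff.2 hw
  have hPw : 0 ≤ w ⬝ᵥ P *ᵥ w := by simpa using hP.dotProduct_mulVec_nonneg w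
  have hcross := dotProduct_mul_add_mul_mulVec_of_mulVec_eq_smul hU A B heig
  rw [sub_sub, sub_mulVec, neg_mulVec, dotProduct_sub, dotProduct_neg, hcross]
  nlinarith

variable [DecidableEq n]

lemma dotProduct_mulVec_add_mul_nonneg_of_sylvester {U P A B : ℝ → Matrix n n ℝ} {a b K : ℝ}
    (hab : a ≤ b) (hU : ∀ t ∈ Icc a b, (U t).IsSymm) (hP : ∀ t ∈ Icc a b, (P t).PosSemidef)
    (hK : ∀ t ∈ Icc a b, ∀ w, w ⬝ᵥ (A t + B t) *ᵥ w ≤ K * (w ⬝ᵥ w))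
    (hderiv : ∀ t ∈ Icc a b, ∀ i j,
      HasDerivAt (fun s => U s i j) ((-P t - A t * U t - U t * B t) i j) t)
    (hUb : (U b).PosSemidef) {η : ℝ} (hη : 0 < η) :
    ∀ w ∈ Metric.sphere (0 : n → ℝ) 1, 0 ≤ w ⬝ᵥ U a *ᵥ w + η * (w ⬝ᵥ w) := by
  set ε : ℝ → ℝ := fun t => η * Real.exp ((K + 1) * (a - t)) with hε
  set q : ℝ → (n → ℝ) → ℝ := fun t w => w ⬝ᵥ U t *ᵥ w + ε t * (w ⬝ᵥ w) with hq
  have hqcont : ContinuousOn (Function.uncurry q) (Icc a b ×ˢ Metric.sphere 0 1) := by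
    have hUcont : ContinuousOn U (Icc a b) := fun t ht =>
      (continuousAt_of_hasDerivAt_apply (hderiv t ht)).continuousWithinAt
    have hquad : Continuous fun p : Matrix n n ℝ × (n → ℝ) => p.2 ⬝ᵥ p.1 *ᵥ p.2 :=
      continuous_snd.dotProduct (continuous_fst.matrix_mulVec continuous_snd)
    refine ContinuousOn.add (hquad.comp_continuousOn ((hUcont.comp continuousOn_fst
      fun p hp => hp.1).prodMk continuousOn_snd)) (Continuous.continuousOn ?_)
    fun_prop
  have hqb : ∀ w ∈ Metric.sphere (0 : n → ℝ) 1, 0 < q b w := by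
    intro w hw
    have hUw : 0 ≤ w ⬝ᵥ U b *ᵥ w := by simpa using hUb.dotProduct_mulVec_nonneg w
    have hww : 0 < w ⬝ᵥ w := by
      simpa using dotProduct_star_self_pos_iff.2 (ne_zero_of_mem_unit_sphere ⟨w, hw⟩)
    have hεb : 0 < ε b := by positivity
    exact add_pos_of_nonneg_of_pos hUw (mul_pos hεb hww)
  intro w₀ hw₀
  by_contra! hq₀
  obtain ⟨s, hs, w, hw, hqs, hmin, hafter⟩ := exists_last_contact (isCompact_sphere 0 1)
    hqcont hqb hw₀ (by simpa [hq, hε] using hq₀.le) hab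
  have hsab : s ∈ Icc a b := Ico_subset_Icc_self hs
  have heig : U s *ᵥ w = (-ε s) • w :=
    mulVec_eq_neg_smul_of_dotProduct_mulVec_add_mul_eq_zero (hU s hsab) hmin hqs
  have hε' : HasDerivAt ε (-((K + 1) * ε s)) s := by
    refine ((((hasDerivAt_id s).const_sub a).const_mul (K + 1)).exp.const_mul η).congr_deriv ?_
    simp only [hε, id]
    ring
  have hqderiv : HasDerivAt (fun t => q t w)
      (w ⬝ᵥ (-P s - A s * U s - U s * B s) *ᵥ w - (K + 1) * ε s * (w ⬝ᵥ w)) s := by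
    refine ((hasDerivAt_dotProduct_mulVec (hderiv s hsab) w w).add
      (hε'.mul_const (w ⬝ᵥ w))).congr_deriv ?_
    ring
  refine (dotProduct_sylvester_mulVec_lt (hU s hsab) (hP s hsab)
    (ne_zero_of_mem_unit_sphere ⟨w, hw⟩) (by positivity) heig (hK s hsab w)).not_ge
    (hqderiv.nonneg_of_eventually_le_right ?_)
  filter_upwards [Ioo_mem_nhdsGT hs.2] with t ht
  exact hqs.symm ▸ (hafter t (Ioo_subset_Ioc_self ht) w hw).le

theorem posSemidef_of_hasDerivAt_sylvester {U P A B : ℝ → Matrix n n ℝ} {a b : ℝ} (hab : a ≤ b)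
    (hU : ∀ t ∈ Icc a b, (U t).IsSymm) (hP : ∀ t ∈ Icc a b, (P t).PosSemidef)
    (hA : ContinuousOn A (Icc a b)) (hB : ContinuousOn B (Icc a b))
    (hderiv : ∀ t ∈ Icc a b, ∀ i j,
      HasDerivAt (fun s => U s i j) ((-P t - A t * U t - U t * B t) i j) t)
    (hUb : (U b).PosSemidef) : (U a).PosSemidef := by
  obtain ⟨K, hK⟩ := isCompact_Icc.exists_dotProduct_mulVec_le (hA.add hB)
  exact posSemidef_of_forall_dotProduct_mulVec_add_mul_nonneg (hU a ⟨le_rfl, hab⟩)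
    fun η hη => dotProduct_mulVec_add_mul_nonneg_of_sylvester hab hU hP hK hderiv hUb hη

end Sylvester

theorem riccati_comparison_general (d : ℕ) (t₀ : ℝ)
    (W : Matrix (Fin d) (Fin d) ℝ)
    (Rbar Rtil F Ftil : ℝ → Matrix (Fin d) (Fin d) ℝ)
    (hFSym : ∀ t ∈ Set.Ioo t₀ 1, (F t).IsSymm)
    (hFtilSym : ∀ t ∈ Set.Ioo t₀ 1, (Ftil t).IsSymm)
    (hRbarPos : ∀ t ∈ Set.Ioo t₀ 1, (Rbar t).PosSemidef)
    (hF : ∀ t ∈ Set.Ioo t₀ 1, ∀ i j, HasDerivAt (fun s => F s i j)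
      ((-(Rbar t) - Rtil t - F t * F t - F t * W - Wᵀ * F t) i j) t)
    (hFtil : ∀ t ∈ Set.Ioo t₀ 1, ∀ i j, HasDerivAt (fun s => Ftil s i j)
      ((-(Rtil t) - Ftil t * Ftil t - Ftil t * W - Wᵀ * Ftil t) i j) t)
    (hnear : ∃ ε > 0, ∀ t ∈ Set.Ioo (1 - ε) 1, t ∈ Set.Ioo t₀ 1 →
      (F t - Ftil t).PosSemidef) :
    ∀ t ∈ Set.Ioo t₀ 1, (F t - Ftil t).PosSemidef := by
  intro a ha
  obtain ⟨ε, hε, hnear⟩ := hnear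
  by_cases hlate : 1 - ε < a
  · exact hnear a ⟨hlate, ha.2⟩ ha
  set b := 1 - ε / 2 with hb
  have hab : a ≤ b := by linarith
  have hsub : Icc a b ⊆ Ioo t₀ 1 := fun t ht => ⟨ha.1.trans_le ht.1, by linarith [ht.2]⟩
  have hFcont : ContinuousOn F (Icc a b) := fun t ht =>
    (continuousAt_of_hasDerivAt_apply (hF t (hsub ht))).continuousWithinAt
  have hFtilcont : ContinuousOn Ftil (Icc a b) := fun t ht =>
    (continuousAt_of_hasDerivAt_apply (hFtil t (hsub ht))).continuousWithinAt
  refine posSemidef_of_hasDerivAt_sylvester (U := F - Ftil) (P := Rbar)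
    (A := fun t => F t + Wᵀ) (B := fun t => Ftil t + W) hab
    (fun t ht => (hFSym t (hsub ht)).sub (hFtilSym t (hsub ht)))
    (fun t ht => hRbarPos t (hsub ht)) (hFcont.add continuousOn_const)
    (hFtilcont.add continuousOn_const) (fun t ht i j => ?_)
    (hnear b ⟨by linarith, by linarith⟩ (hsub ⟨hab, le_rfl⟩))
  refine ((hF t (hsub ht) i j).sub (hFtil t (hsub ht) i j)).congr_deriv ?_
  rw [← Matrix.sub_apply, riccati_sub_riccati]
  rfl

/-- Matrix Riccati comparison principle: if `F` solves the Riccati equation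
with an extra nonnegative curvature term `R̄` and `F ≥ F̃` near `t = 1`,
then `F ≥ F̃` on all of `(t₀, 1)`. -/
theorem riccati_comparison (d : ℕ) (t₀ : ℝ) (ht₀ : t₀ < 1)
    (W : Matrix (Fin d) (Fin d) ℝ)
    (Rbar Rtil F Ftil : ℝ → Matrix (Fin d) (Fin d) ℝ)
    (hRbarCont : ContinuousOn Rbar (Set.Ioo t₀ 1))
    (hRtilCont : ContinuousOn Rtil (Set.Ioo t₀ 1))
    (hRbarSym : ∀ t ∈ Set.Ioo t₀ 1, (Rbar t).IsSymm)
    (hRtilSym : ∀ t ∈ Set.Ioo t₀ 1, (Rtil t).IsSymm)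
    (hFSym : ∀ t ∈ Set.Ioo t₀ 1, (F t).IsSymm)
    (hFtilSym : ∀ t ∈ Set.Ioo t₀ 1, (Ftil t).IsSymm)
    (hRbarPos : ∀ t ∈ Set.Ioo t₀ 1, (Rbar t).PosSemidef)
    (hF : ∀ t ∈ Set.Ioo t₀ 1, ∀ i j, HasDerivAt (fun s => F s i j)
      ((-(Rbar t) - Rtil t - F t * F t - F t * W - Wᵀ * F t) i j) t)
    (hFtil : ∀ t ∈ Set.Ioo t₀ 1, ∀ i j, HasDerivAt (fun s => Ftil s i j)
      ((-(Rtil t) - Ftil t * Ftil t - Ftil t * W - Wᵀ * Ftil t) i j) t)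
    (hnear : ∃ ε > 0, ∀ t ∈ Set.Ioo (1 - ε) 1, t ∈ Set.Ioo t₀ 1 →
      (F t - Ftil t).PosSemidef) :
    ∀ t ∈ Set.Ioo t₀ 1, (F t - Ftil t).PosSemidef :=
  riccati_comparison_general d t₀ W Rbar Rtil F Ftil hFSym hFtilSym hRbarPos hF hFtil hnear
end
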